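/- In the counterexample language over {f/1, g/1, Ω/0}: f(f(g(Ω))) → g(g(Ω)) and g(g(Ω)) has no unlabeled →-successor; f(f(g(Ω))) ⇓ g(Ω); but f(f(g(Ω))) ⇓ g(g(Ω)) does not hold. Consequently the equivalence "t ⇓ v iff (t →* v and v has no →-successor)" fails for this system. -/
import Mathlib


/-- Closed terms of the counterexample language over `{f/1, g/1, Ω/0}`. -/
inductive T : Type
  | Om : T
  | f : T → T
  | g : T → T

/-- Labeled transitions: `g(x) ─y→ f(y)` for every closed term `y`. -/
inductive LStep : T → T → T → Prop
  | g (x y : T) : LStep (.g x) y (.f y)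

/-- Unlabeled small-step transitions:
`Ω → Ω`; if `x → y` then `f(x) → g(y)`; if `x ─x→ y` for some `y` then `f(x) → x`. -/
inductive Step : T → T → Prop
  | omega : Step .Om .Om
  | f {x y : T} : Step x y → Step (.f x) (.g y)
  | fv {x y : T} : LStep x x y → Step (.f x) x

/-- Big-step semantics: `g(x) ⇓ g(x)`; `f(x) ⇓ v` if `x ⇓ g(y)` and `g(y) ⇓ v`. -/
inductive Big : T → T → Prop
  | g (x : T) : Big (.g x) (.g x)
  | f {x y v : T} : Big x (.g y) → Big (.g y) v → Big (.f x) v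

lemma step1 : Step (.f (.f (.g .Om))) (.g (.g .Om)) :=
  Step.f (Step.fv (LStep.g T.Om (.g .Om)))

lemma notBig : ¬ Big (.f (.f (.g .Om))) (.g (.g .Om)) := by
  intro h
  cases h with
  | f h1 h2 =>
    cases h2
    cases h1 with
    | f h3 h4 =>
      cases h3
      cases h4

/-- In the counterexample language: `f(f(g(Ω))) → g(g(Ω))` and `g(g(Ω))` is stuck;
`f(f(g(Ω))) ⇓ g(Ω)`; but not `f(f(g(Ω))) ⇓ g(g(Ω))`. Consequently the equivalence
`t ⇓ v ↔ (t →* v ∧ v stuck)` fails for this system. -/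
theorem counterexample_equivalence_fails :
    Step (.f (.f (.g .Om))) (.g (.g .Om)) ∧
    (¬ ∃ u, Step (.g (.g .Om)) u) ∧
    Big (.f (.f (.g .Om))) (.g .Om) ∧
    ¬ Big (.f (.f (.g .Om))) (.g (.g .Om)) ∧
    ¬ (∀ t v : T, Big t v ↔ (Relation.ReflTransGen Step t v ∧ ¬ ∃ u, Step v u)) := by
  have stuck : ¬ ∃ u, Step (.g (.g .Om)) u := by rintro ⟨u, hu⟩; cases hu
  refine ⟨step1, stuck, ?_, notBig, ?_⟩
  · exact Big.f (Big.f (Big.g .Om) (Big.g .Om)) (Big.g .Om)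
  · intro h
    exact notBig ((h _ _).mpr ⟨Relation.ReflTransGen.single step1, stuck⟩)
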